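/- arXiv:0912.0336 — 2 statements merged into one kernel-verified Lean document; each statement's English description precedes it below -/
import Mathlib

section
/- Let A be a nonnegative real m×n matrix whose row sums are all equal and whose column sums are all equal. Then σ₂(A) ≥ ‖A − ρ(A)·J_{m,n}‖_⊡, where ρ(A) = Σ(A)/(mn) is the average entry and J_{m,n} is the all-ones m×n matrix. -/
open Matrix Finset

/-- The norm `‖A‖_⊡ = max_{X,Y ≠ ∅} |Σ(A[X,Y])| / √(|X||Y|)`. -/
noncomputable def boxNorm {m n : ℕ} (A : Matrix (Fin m) (Fin n) ℝ) : ℝ :=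
  Finset.univ.sup' Finset.univ_nonempty
    (fun p : Finset (Fin m) × Finset (Fin n) =>
      |∑ i ∈ p.1, ∑ j ∈ p.2, A i j| / Real.sqrt (p.1.card * p.2.card))

/-- `f` rearranged in decreasing order. -/
noncomputable def sortDesc {N : ℕ} (f : Fin N → ℝ) : Fin N → ℝ :=
  fun i => f (Tuple.sort f i.rev)

/-- The singular values `σ₁(A) ≥ σ₂(A) ≥ ⋯` of `A` (0-indexed). -/
noncomputable def singVal {m n : ℕ} (A : Matrix (Fin m) (Fin n) ℝ) (i : ℕ) : ℝ :=
  if h : i < n then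
    Real.sqrt (sortDesc (show (Aᵀ * A).IsHermitian by
      simpa using Matrix.isHermitian_conjTranspose_mul_self A).eigenvalues ⟨i, h⟩)
  else 0

/-! With `r` the common row sum, `A - ρ J = A (I - J / n)`, so the sum of the deviation over
`X × Y` is `∑ i ∈ X, (A y) i` for the balanced indicator `y` of `Y`, which is orthogonal to `1`.
Cauchy–Schwarz bounds its square by `|X| ‖A y‖² = |X| ⟪y, Aᵀ A y⟫`. The vector `1` is an eigenvector
of `Aᵀ A` for `r c`, and `r c` dominates every eigenvalue since `Aᵀ A` is nonnegative with column
sums `r c`; hence on `1ᗮ` the quadratic form is at most `σ₂² ‖y‖² ≤ σ₂² |Y|`. -/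

open scoped BigOperators

lemma exists_forall_eq_of_forall_eq {ι α : Type*} [Zero α] {f : ι → α} (h : ∀ i i', f i = f i') :
    ∃ a, ∀ i, f i = a := by
  rcases isEmpty_or_nonempty ι with hι | ⟨⟨i₀⟩⟩
  · exact ⟨0, isEmptyElim⟩
  · exact ⟨f i₀, fun i => h i i₀⟩

lemma Fintype.sum_balance_sq_le {ι : Type*} [Fintype ι] (f : ι → ℝ) :
    ∑ x, balance f x ^ 2 ≤ ∑ x, f x ^ 2 := by
  set a := 𝔼 y, f y
  calc ∑ x, balance f x ^ 2 ≤ ∑ x, balance f x ^ 2 + ∑ _x : ι, a ^ 2 :=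
        le_add_of_nonneg_right (Finset.sum_nonneg fun _ _ => sq_nonneg a)
    _ = ∑ x, (balance f x + a) ^ 2 := by
        simp only [add_sq, Finset.sum_add_distrib, ← Finset.sum_mul, ← Finset.mul_sum, sum_balance,
          mul_zero, zero_mul, add_zero]
    _ = ∑ x, f x ^ 2 := by simp only [balance_apply, sub_add_cancel, a]

lemma sum_mul_sq_le_of_sum_mul_eq_zero {ι : Type*} [Fintype ι] {μ w d : ι → ℝ} {lam top : ℝ}
    {i₀ : ι} (hlam : ∀ i ≠ i₀, μ i ≤ lam) (htop : μ i₀ ≤ top) (hd : ∀ i, μ i * d i = top * d i)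
    (hd0 : d ≠ 0) (hwd : ∑ i, w i * d i = 0) :
    ∑ i, μ i * w i ^ 2 ≤ lam * ∑ i, w i ^ 2 := by
  suffices h : ∀ i, μ i ≤ lam ∨ w i = 0 by
    rw [mul_sum]
    refine sum_le_sum fun i _ => ?_
    rcases h i with h | h
    · exact mul_le_mul_of_nonneg_right h (sq_nonneg _)
    · simp [h]
  intro i
  by_cases hi : i = i₀
  swap
  · exact Or.inl (hlam i hi)
  subst hi
  by_contra! hbig
  -- `μ j < top` for `j ≠ i`, so `d` is supported at `i` and `hwd` reads `w i * d i = 0`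
  have hd_ne : ∀ j ≠ i, d j = 0 := fun j hj => by
    have hlt : μ j < top := by linarith [hlam j hj, hbig.1]
    by_contra hdj
    exact hlt.ne (mul_right_cancel₀ hdj (hd j))
  obtain ⟨j, hdj⟩ := Function.ne_iff.mp hd0
  obtain rfl : j = i := by_contra fun hji => hdj (hd_ne j hji)
  rw [sum_eq_single j (fun k _ hk => by rw [hd_ne k hk, mul_zero]) (by simp)] at hwd
  exact hbig.2 ((mul_eq_zero.mp hwd).resolve_right hdj)

lemma abs_le_of_mulVec_eq_smul {ι : Type*} [Fintype ι] {M : Matrix ι ι ℝ} {R μ : ℝ}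
    {v : ι → ℝ} (hcol : ∀ j, ∑ i, |M i j| ≤ R) (hv : M *ᵥ v = μ • v) (hv0 : v ≠ 0) :
    |μ| ≤ R := by
  have hpos : 0 < ∑ j, |v j| := by
    obtain ⟨j, hj⟩ := Function.ne_iff.mp hv0
    exact sum_pos' (fun _ _ => abs_nonneg _) ⟨j, mem_univ j, abs_pos.mpr hj⟩
  refine le_of_mul_le_mul_right ?_ hpos
  calc |μ| * ∑ j, |v j| = ∑ i, |(M *ᵥ v) i| := by
        simp [hv, mul_sum, abs_mul]
    _ ≤ ∑ i, ∑ j, |M i j| * |v j| := sum_le_sum fun i _ => by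
        simpa only [mulVec, dotProduct, abs_mul] using
          abs_sum_le_sum_abs (fun j => M i j * v j) univ
    _ = ∑ j, (∑ i, |M i j|) * |v j| := by
        rw [sum_comm]; simp only [sum_mul]
    _ ≤ R * ∑ j, |v j| := by
        rw [mul_sum]
        exact sum_le_sum fun j _ => mul_le_mul_of_nonneg_right (hcol j) (abs_nonneg _)

lemma OrthonormalBasis.sum_dotProduct_mul_dotProduct {ι κ : Type*} [Fintype ι] [Fintype κ]
    (b : OrthonormalBasis ι ℝ (EuclideanSpace ℝ κ)) (v u : κ → ℝ) :
    ∑ i, (⇑(b i) ⬝ᵥ v) * (⇑(b i) ⬝ᵥ u) = v ⬝ᵥ u := by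
  have := b.sum_inner_mul_inner (WithLp.toLp 2 v) (WithLp.toLp 2 u)
  simp only [EuclideanSpace.inner_eq_star_dotProduct, star_trivial] at this
  simpa only [dotProduct_comm u] using this

namespace Matrix.IsHermitian

variable {ι : Type*} [Fintype ι] [DecidableEq ι] {M : Matrix ι ι ℝ}

lemma dotProduct_eigenvectorBasis_mulVec (hM : M.IsHermitian) (i : ι) (v : ι → ℝ) :
    ⇑(hM.eigenvectorBasis i) ⬝ᵥ (M *ᵥ v) = hM.eigenvalues i * (⇑(hM.eigenvectorBasis i) ⬝ᵥ v) := by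
  have hMt : Mᵀ = M := by simpa [conjTranspose_eq_transpose_of_trivial] using hM.eq
  rw [dotProduct_mulVec, ← mulVec_transpose, hMt, hM.mulVec_eigenvectorBasis, smul_dotProduct,
    smul_eq_mul]

lemma dotProduct_mulVec_le_of_dotProduct_eq_zero (hM : M.IsHermitian) {u v : ι → ℝ}
    {top lam : ℝ} (i₀ : ι) (hu : M *ᵥ u = top • u) (hu0 : u ≠ 0) (htop : hM.eigenvalues i₀ ≤ top)
    (hlam : ∀ i ≠ i₀, hM.eigenvalues i ≤ lam) (hv : v ⬝ᵥ u = 0) :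
    v ⬝ᵥ (M *ᵥ v) ≤ lam * (v ⬝ᵥ v) := by
  let b := hM.eigenvectorBasis
  have hcoord : ∀ i, hM.eigenvalues i * (⇑(b i) ⬝ᵥ u) = top * (⇑(b i) ⬝ᵥ u) := fun i => by
    rw [← hM.dotProduct_eigenvectorBasis_mulVec, hu, dotProduct_smul, smul_eq_mul]
  have hd0 : (fun i => ⇑(b i) ⬝ᵥ u) ≠ 0 := fun h0 => hu0 <| dotProduct_self_eq_zero.mp <| by
    rw [← b.sum_dotProduct_mul_dotProduct]
    simp [funext_iff.mp h0]
  have hvu : ∑ i, (⇑(b i) ⬝ᵥ v) * (⇑(b i) ⬝ᵥ u) = 0 := by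
    rw [b.sum_dotProduct_mul_dotProduct, hv]
  calc v ⬝ᵥ (M *ᵥ v) = ∑ i, hM.eigenvalues i * (⇑(b i) ⬝ᵥ v) ^ 2 := by
        rw [← b.sum_dotProduct_mul_dotProduct]
        exact Finset.sum_congr rfl fun i _ => by
          rw [hM.dotProduct_eigenvectorBasis_mulVec]; ring
    _ ≤ lam * ∑ i, (⇑(b i) ⬝ᵥ v) ^ 2 := sum_mul_sq_le_of_sum_mul_eq_zero hlam htop hcoord hd0 hvu
    _ = lam * (v ⬝ᵥ v) := by simp only [sq, b.sum_dotProduct_mul_dotProduct]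

end Matrix.IsHermitian

lemma exists_forall_ne_le_sortDesc_one {N : ℕ} (f : Fin N → ℝ) (hN : 1 < N) :
    ∃ i₀, ∀ i ≠ i₀, f i ≤ sortDesc f ⟨1, hN⟩ := by
  set σ := Tuple.sort f
  refine ⟨σ (Fin.rev ⟨0, by omega⟩), fun i hi => ?_⟩
  have hσi : σ.symm i ≠ Fin.rev ⟨0, by omega⟩ := fun h => hi <| by rw [← h, σ.apply_symm_apply]
  have hmono : (f ∘ σ) (σ.symm i) ≤ (f ∘ σ) (Fin.rev ⟨1, hN⟩) := by
    apply Tuple.monotone_sort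
    simp only [Ne, Fin.ext_iff, Fin.le_def, Fin.val_rev] at hσi ⊢
    have := (σ.symm i).isLt
    omega
  simpa [sortDesc] using hmono

lemma singVal_nonneg {m n : ℕ} (A : Matrix (Fin m) (Fin n) ℝ) (i : ℕ) : 0 ≤ singVal A i := by
  unfold singVal
  split
  · exact Real.sqrt_nonneg _
  · exact le_rfl

section ConstantLineSums

variable {m n : ℕ} {A : Matrix (Fin m) (Fin n) ℝ} {r c : ℝ}

lemma transpose_mul_self_mulVec_one (hrow : ∀ i, ∑ j, A i j = r)
    (hcol : ∀ j, ∑ i, A i j = c) : (Aᵀ * A) *ᵥ 1 = (r * c) • 1 := by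
  have hA : A *ᵥ 1 = r • 1 := funext fun i => by simp [mulVec, dotProduct, hrow]
  have hAt : Aᵀ *ᵥ 1 = c • 1 := funext fun j => by simp [mulVec, dotProduct, hcol]
  rw [← mulVec_mulVec, hA, mulVec_smul, hAt, smul_smul]

lemma one_vecMul_transpose_mul_self (hrow : ∀ i, ∑ j, A i j = r)
    (hcol : ∀ j, ∑ i, A i j = c) : 1 ᵥ* (Aᵀ * A) = (r * c) • 1 := by
  rw [← mulVec_transpose, transpose_mul, transpose_transpose,
    transpose_mul_self_mulVec_one hrow hcol]

lemma sum_sub_average_eq_mulVec_balance (hrow : ∀ i, ∑ j, A i j = r) (Y : Finset (Fin n))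
    (i : Fin m) :
    ∑ j ∈ Y, (A i j - (∑ i', ∑ j', A i' j') / (m * n)) =
      (A *ᵥ Fintype.balance fun j => if j ∈ Y then 1 else 0) i := by
  have hm : (m : ℝ) ≠ 0 := by have := i.pos; positivity
  simp only [mulVec, dotProduct, Fintype.balance_apply, Fintype.expect_eq_sum_div_card, mul_sub,
    sum_sub_distrib, ← sum_mul, hrow, mul_ite, mul_one, mul_zero, sum_ite_mem, univ_inter,
    sum_const, nsmul_eq_mul, card_univ, Fintype.card_fin]
  field_simp

lemma mulVec_dotProduct_mulVec_le_singVal_sq (hA : ∀ i j, 0 ≤ A i j)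
    (hrow : ∀ i, ∑ j, A i j = r) (hcol : ∀ j, ∑ i, A i j = c) {y : Fin n → ℝ} (hy : ∑ j, y j = 0) :
    (A *ᵥ y) ⬝ᵥ (A *ᵥ y) ≤ singVal A 1 ^ 2 * (y ⬝ᵥ y) := by
  rcases le_or_gt n 1 with hn | hn
  · have hy0 : y = 0 := by
      interval_cases n
      · exact Subsingleton.elim _ _
      · simpa [funext_iff, Fin.forall_fin_one] using hy
    simp [hy0]
  have hM : (Aᵀ * A).IsHermitian := by simpa using isHermitian_conjTranspose_mul_self A
  have hμ : ∀ i, 0 ≤ hM.eigenvalues i := eigenvalues_conjTranspose_mul_self_nonneg A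
  obtain ⟨i₀, hi₀⟩ := exists_forall_ne_le_sortDesc_one hM.eigenvalues hn
  have hsv : singVal A 1 ^ 2 = sortDesc hM.eigenvalues ⟨1, hn⟩ := by
    rw [singVal, dif_pos hn]
    exact Real.sq_sqrt (hμ _)
  have hcolM : ∀ j, ∑ i, |(Aᵀ * A) i j| ≤ r * c := fun j => by
    have hM_nonneg : ∀ i, 0 ≤ (Aᵀ * A) i j := fun i => by
      rw [mul_apply]
      exact sum_nonneg fun k _ => mul_nonneg (hA k i) (hA k j)
    simp only [abs_of_nonneg (hM_nonneg _)]
    simpa [vecMul, dotProduct] using (congrFun (one_vecMul_transpose_mul_self hrow hcol) j).le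
  have hperron : hM.eigenvalues i₀ ≤ r * c :=
    (le_abs_self _).trans <| abs_le_of_mulVec_eq_smul hcolM (hM.mulVec_eigenvectorBasis i₀) <| by
      simpa using hM.eigenvectorBasis.orthonormal.ne_zero i₀
  have : Nonempty (Fin n) := ⟨⟨0, by omega⟩⟩
  rw [dotProduct_mulVec, ← mulVec_transpose, mulVec_mulVec, dotProduct_comm, hsv]
  exact hM.dotProduct_mulVec_le_of_dotProduct_eq_zero i₀ (transpose_mul_self_mulVec_one hrow hcol)
    one_ne_zero hperron hi₀ (by simpa [dotProduct] using hy)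

end ConstantLineSums

/-- If `A` is a nonnegative real `m × n` matrix with equal row sums and equal
column sums, then `σ₂(A) ≥ ‖A − ρ(A) J_{m,n}‖_⊡`, where `ρ(A) = Σ(A)/(mn)`. -/
theorem expander_mixing_nonneg {m n : ℕ} (A : Matrix (Fin m) (Fin n) ℝ)
    (hA : ∀ i j, 0 ≤ A i j)
    (hrow : ∀ i i' : Fin m, ∑ j, A i j = ∑ j, A i' j)
    (hcol : ∀ j j' : Fin n, ∑ i, A i j = ∑ i, A i j') :
    boxNorm (Matrix.of fun i j =>
        A i j - (∑ i', ∑ j', A i' j') / (m * n)) ≤ singVal A 1 := by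
  obtain ⟨r, hr⟩ := exists_forall_eq_of_forall_eq (f := fun i => ∑ j, A i j) hrow
  obtain ⟨c, hc⟩ := exists_forall_eq_of_forall_eq (f := fun j => ∑ i, A i j) hcol
  have hσ := singVal_nonneg A 1
  refine sup'_le _ _ fun ⟨X, Y⟩ _ => div_le_of_le_mul₀ (Real.sqrt_nonneg _) hσ ?_
  set u : Fin n → ℝ := fun j => if j ∈ Y then 1 else 0
  set z := A *ᵥ Fintype.balance u
  have hu : Fintype.balance u ⬝ᵥ Fintype.balance u ≤ #Y := by
    simpa [dotProduct, ← sq, u, apply_ite (· ^ 2)] using Fintype.sum_balance_sq_le u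
  rw [← Real.sqrt_sq hσ, ← Real.sqrt_mul (sq_nonneg _)]
  refine Real.abs_le_sqrt ?_
  simp only [of_apply, sum_sub_average_eq_mulVec_balance hr]
  calc (∑ i ∈ X, z i) ^ 2 ≤ #X * ∑ i ∈ X, z i ^ 2 := sq_sum_le_card_mul_sum_sq
    _ ≤ #X * (z ⬝ᵥ z) := by
        gcongr
        simpa [dotProduct, sq] using sum_le_univ_sum_of_nonneg (fun i => sq_nonneg (z i))
    _ ≤ #X * (singVal A 1 ^ 2 * #Y) := by
        gcongr
        exact (mulVec_dotProduct_mulVec_le_singVal_sq hA hr hc (Fintype.sum_balance u)).trans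
          (by gcongr)
    _ = singVal A 1 ^ 2 * (#X * #Y) := by ring
end

section
/- Let n ≥ 2 and let A be the n×n real symmetric matrix with entries a_{ij} = (ij)^{−1/2}. Then σ₁(A) ≥ Σ_{i=1}^n 1/i > log n, while ‖A‖_⊡ < 4. Consequently σ₁(A) > (1/4)·‖A‖_⊡·log n, showing that the upper bound σ₁(A) ≤ C·‖A‖_⊡·log n cannot be improved beyond a constant factor for square matrices. -/
open Matrix Finset

/-- The `n × n` matrix with entries `a_{ij} = (ij)^{-1/2}` (1-indexed). -/
noncomputable def hilbertLike (n : ℕ) : Matrix (Fin n) (Fin n) ℝ :=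
  Matrix.of fun i j => 1 / Real.sqrt (((i : ℕ) + 1) * ((j : ℕ) + 1))

/-!
The matrix is the rank-one matrix `u uᵀ` with `uᵢ = i^{-1/2}`, so `u` is an eigenvector of
`AᵀA = A²` with eigenvalue `‖u‖⁴ = H_n²`, whence `σ₁(A) ≥ H_n > log (n + 1)`. Block sums factor
as `(Σ_{i∈X} uᵢ)(Σ_{j∈Y} uⱼ)`, and since `u` is decreasing, `Σ_{i∈X} uᵢ ≤ Σ_{k≤|X|} k^{-1/2}`,
which telescopes against `1/√k < 2(√k - √(k-1))` to give less than `2√|X|`.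
-/

theorem Finset.sum_le_sum_range_card_of_antitone {M : Type*} [AddCommMonoid M] [PartialOrder M]
    [IsOrderedAddMonoid M] {f : ℕ → M} (hf : Antitone f) (s : Finset ℕ) :
    ∑ i ∈ s, f i ≤ ∑ k ∈ range s.card, f k := by
  induction s using Finset.induction_on_max with
  | empty => simp
  | insert a s hlt ih =>
    have ha : a ∉ s := fun h => lt_irrefl a (hlt a h)
    have hcard : s.card ≤ a := by
      simpa using card_le_card (fun x hx => mem_range.mpr (hlt x hx) : s ⊆ range a)
    rw [sum_insert ha, card_insert_of_notMem ha, sum_range_succ, add_comm]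
    exact add_le_add ih (hf hcard)

theorem one_div_sqrt_succ_lt (k : ℕ) :
    1 / √((k : ℝ) + 1) < 2 * (√((k : ℝ) + 1) - √k) := by
  have hb : 0 < √((k : ℝ) + 1) := by positivity
  have hab : √(k : ℝ) < √((k : ℝ) + 1) := Real.sqrt_lt_sqrt (by positivity) (by linarith)
  have hsq : √((k : ℝ) + 1) ^ 2 - √(k : ℝ) ^ 2 = 1 := by
    rw [Real.sq_sqrt (by positivity), Real.sq_sqrt (by positivity)]; ring
  rw [div_lt_iff₀ hb]
  nlinarith [sq_pos_of_pos (sub_pos.mpr hab)]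

theorem sum_range_one_div_sqrt_succ_lt {p : ℕ} (hp : 0 < p) :
    ∑ k ∈ range p, 1 / √((k : ℝ) + 1) < 2 * √p := by
  calc ∑ k ∈ range p, 1 / √((k : ℝ) + 1)
      < ∑ k ∈ range p, 2 * (√((k + 1 : ℕ) : ℝ) - √k) :=
        sum_lt_sum_of_nonempty (nonempty_range_iff.mpr hp.ne') fun k _ => by
          exact_mod_cast one_div_sqrt_succ_lt k
    _ = 2 * √p := by rw [← mul_sum, sum_range_sub (fun k => √(k : ℝ))]; simp

theorem sum_one_div_sqrt_succ_lt {n : ℕ} {X : Finset (Fin n)} (hX : X.Nonempty) :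
    ∑ i ∈ X, 1 / √(((i : ℕ) : ℝ) + 1) < 2 * √X.card := by
  have hanti : Antitone fun k : ℕ => 1 / √((k : ℝ) + 1) := fun a b hab => by
    dsimp only
    gcongr
  calc ∑ i ∈ X, 1 / √(((i : ℕ) : ℝ) + 1)
      = ∑ k ∈ X.map Fin.valEmbedding, 1 / √((k : ℝ) + 1) := by rw [sum_map]; rfl
    _ ≤ ∑ k ∈ range X.card, 1 / √((k : ℝ) + 1) := by
      simpa using sum_le_sum_range_card_of_antitone hanti (X.map Fin.valEmbedding)
    _ < 2 * √X.card := sum_range_one_div_sqrt_succ_lt (card_pos.mpr hX)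

theorem boxNorm_lt_of_forall {m n : ℕ} {A : Matrix (Fin m) (Fin n) ℝ} {c : ℝ} (hc : 0 < c)
    (h : ∀ X Y, X.Nonempty → Y.Nonempty →
      |∑ i ∈ X, ∑ j ∈ Y, A i j| < c * (√X.card * √Y.card)) :
    boxNorm A < c := by
  refine (sup'_lt_iff _).mpr fun ⟨X, Y⟩ _ => ?_
  rcases X.eq_empty_or_nonempty with rfl | hX
  · simpa using hc
  rcases Y.eq_empty_or_nonempty with rfl | hY
  · simpa using hc
  rw [div_lt_iff₀ (by positivity), Real.sqrt_mul (Nat.cast_nonneg _)]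
  exact h X Y hX hY

theorem boxNorm_vecMulVec_lt {m n : ℕ} {u : Fin m → ℝ} {v : Fin n → ℝ} {a b : ℝ}
    (ha : 0 < a) (hb : 0 < b)
    (hu : ∀ X : Finset (Fin m), X.Nonempty → |∑ i ∈ X, u i| < a * √X.card)
    (hv : ∀ Y : Finset (Fin n), Y.Nonempty → |∑ j ∈ Y, v j| < b * √Y.card) :
    boxNorm (vecMulVec u v) < a * b := by
  refine boxNorm_lt_of_forall (mul_pos ha hb) fun X Y hX hY => ?_
  simp only [vecMulVec_apply, ← mul_sum, ← sum_mul, abs_mul]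
  calc |∑ i ∈ X, u i| * |∑ j ∈ Y, v j| < a * √X.card * (b * √Y.card) :=
        mul_lt_mul'' (hu X hX) (hv Y hY) (abs_nonneg _) (abs_nonneg _)
    _ = a * b * (√X.card * √Y.card) := by ring

theorem le_sortDesc_zero {N : ℕ} (hN : 0 < N) (f : Fin N → ℝ) (i : Fin N) :
    f i ≤ sortDesc f ⟨0, hN⟩ := by
  calc f i = f (Tuple.sort f ((Tuple.sort f).symm i)) := by simp
    _ ≤ f (Tuple.sort f (Fin.rev ⟨0, hN⟩)) :=
        Tuple.monotone_sort f (Fin.le_def.mpr (by simp only [Fin.val_rev]; omega))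

theorem Matrix.IsHermitian.mem_range_eigenvalues_of_mulVec_eq_smul {N : ℕ}
    {B : Matrix (Fin N) (Fin N) ℝ} (hB : B.IsHermitian) {μ : ℝ} {v : Fin N → ℝ} (hv : v ≠ 0)
    (hBv : B *ᵥ v = μ • v) : μ ∈ Set.range hB.eigenvalues := by
  have hμ : Module.End.HasEigenvalue B.toLin' μ :=
    Module.End.hasEigenvalue_of_hasEigenvector ⟨Module.End.mem_eigenspace_iff.mpr hBv, hv⟩
  rw [← hB.spectrum_real_eq_range_eigenvalues, ← spectrum_toLin']
  exact hμ.mem_spectrum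

theorem le_singVal_zero_of_mulVec_eq {m n : ℕ} (A : Matrix (Fin m) (Fin n) ℝ) {σ : ℝ}
    (hσ : 0 ≤ σ) {v : Fin n → ℝ} (hv : v ≠ 0) (hAv : (Aᵀ * A) *ᵥ v = σ ^ 2 • v) :
    σ ≤ singVal A 0 := by
  obtain ⟨i, -⟩ := Function.ne_iff.mp hv
  have hn : 0 < n := i.pos
  have hB : (Aᵀ * A).IsHermitian := by
    simpa using Matrix.isHermitian_conjTranspose_mul_self A
  obtain ⟨j, hj⟩ := hB.mem_range_eigenvalues_of_mulVec_eq_smul hv hAv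
  rw [singVal, dif_pos hn, ← Real.sqrt_sq hσ, ← hj]
  exact Real.sqrt_le_sqrt (le_sortDesc_zero hn hB.eigenvalues j)

theorem dotProduct_self_le_singVal_vecMulVec {n : ℕ} (u : Fin n → ℝ) :
    u ⬝ᵥ u ≤ singVal (vecMulVec u u) 0 := by
  rcases eq_or_ne u 0 with rfl | hu
  · simp only [zero_dotProduct]
    unfold singVal
    split_ifs <;> positivity
  refine le_singVal_zero_of_mulVec_eq _ (dotProduct_self_star_nonneg u) hu ?_
  rw [transpose_vecMulVec, ← mulVec_mulVec, vecMulVec_mulVec, vecMulVec_mulVec]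
  simp only [op_smul_eq_smul, dotProduct_smul, smul_eq_mul, sq]

theorem log_lt_sum_range_one_div {n : ℕ} (hn : 0 < n) :
    Real.log n < ∑ i ∈ range n, (1 : ℝ) / (i + 1) := by
  calc Real.log n < Real.log (n + 1 : ℕ) :=
        Real.log_lt_log (by exact_mod_cast hn) (by push_cast; linarith)
    _ ≤ harmonic n := log_add_one_le_harmonic n
    _ = ∑ i ∈ range n, (1 : ℝ) / (i + 1) := by simp [harmonic]

noncomputable def invSqrtVec (n : ℕ) : Fin n → ℝ := fun i => 1 / √(((i : ℕ) : ℝ) + 1)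

theorem hilbertLike_eq_vecMulVec (n : ℕ) :
    hilbertLike n = vecMulVec (invSqrtVec n) (invSqrtVec n) := by
  ext i j
  simp only [hilbertLike, invSqrtVec, of_apply, vecMulVec_apply,
    Real.sqrt_mul (Nat.cast_add_one_pos (i : ℕ)).le, one_div_mul_one_div]

theorem invSqrtVec_dotProduct_self (n : ℕ) :
    invSqrtVec n ⬝ᵥ invSqrtVec n = ∑ i ∈ range n, (1 : ℝ) / (i + 1) := by
  rw [dotProduct, ← Fin.sum_univ_eq_sum_range (fun i => (1 : ℝ) / (i + 1))]
  refine sum_congr rfl fun i _ => ?_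
  rw [invSqrtVec, one_div_mul_one_div, Real.mul_self_sqrt (Nat.cast_add_one_pos _).le]

theorem sum_invSqrtVec_lt {n : ℕ} {X : Finset (Fin n)} (hX : X.Nonempty) :
    |∑ i ∈ X, invSqrtVec n i| < 2 * √X.card := by
  rw [abs_of_nonneg (sum_nonneg fun i _ => by unfold invSqrtVec; positivity)]
  exact sum_one_div_sqrt_succ_lt hX

/-- For `n ≥ 2` and the symmetric matrix `A` with `a_{ij} = (ij)^{-1/2}`:
`σ₁(A) ≥ Σ_{i=1}^n 1/i > log n`, while `‖A‖_⊡ < 4`; consequently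
`σ₁(A) > (1/4) ‖A‖_⊡ log n`, so the bound
`σ₁(A) ≤ C ‖A‖_⊡ log n` is tight up to a constant factor. -/
theorem boxNorm_log_tight (n : ℕ) (hn : 2 ≤ n) :
    singVal (hilbertLike n) 0 ≥ ∑ i ∈ Finset.range n, (1 : ℝ) / (i + 1) ∧
    (∑ i ∈ Finset.range n, (1 : ℝ) / (i + 1)) > Real.log n ∧
    boxNorm (hilbertLike n) < 4 ∧
    singVal (hilbertLike n) 0 > (1 / 4) * boxNorm (hilbertLike n) * Real.log n := by
  have hσ : ∑ i ∈ range n, (1 : ℝ) / (i + 1) ≤ singVal (hilbertLike n) 0 := by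
    rw [← invSqrtVec_dotProduct_self, hilbertLike_eq_vecMulVec]
    exact dotProduct_self_le_singVal_vecMulVec _
  have hlog := log_lt_sum_range_one_div (n := n) (by omega)
  have hbox : boxNorm (hilbertLike n) < 4 := by
    rw [hilbertLike_eq_vecMulVec, show (4 : ℝ) = 2 * 2 by norm_num]
    exact boxNorm_vecMulVec_lt two_pos two_pos (fun _ => sum_invSqrtVec_lt)
      (fun _ => sum_invSqrtVec_lt)
  have hlog_pos : 0 < Real.log n := Real.log_pos (by exact_mod_cast hn)
  refine ⟨hσ, hlog, hbox, ?_⟩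
  calc (1 / 4) * boxNorm (hilbertLike n) * Real.log n < 1 * Real.log n := by gcongr; linarith
    _ < singVal (hilbertLike n) 0 := by linarith
end
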